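/- arXiv:2312.04439 — 2 statements merged into one kernel-verified Lean document; each statement's English description precedes it below -/
import Mathlib

section
/- A monoid endomorphism f of P_fin0(ℕ) is an automorphism if and only if it is injective and f({0,1}) = {0,1}. -/
open Pointwise

/-- The reduced power monoid `P_fin0(ℕ)`: finite subsets of ℕ containing 0,
under setwise (pointwise) addition. -/
def P0 : AddSubmonoid (Finset ℕ) where
  carrier := {X : Finset ℕ | (0 : ℕ) ∈ X}
  add_mem' := fun hx hy => by simpa using Finset.add_mem_add hx hy
  zero_mem' := by simp [Finset.mem_zero]

/-- Maximum of a set in `P0`. -/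
def mx (X : P0) : ℕ := X.1.max' ⟨0, X.2⟩

theorem mem_P0 {X : Finset ℕ} : X ∈ P0 ↔ (0 : ℕ) ∈ X := Iff.rfl

/-!
The maximum `mx : P0 → ℕ` is additive, the interval `[0, n]` is `n • {0, 1}`, and every `X` with
`mx X = n` absorbs `[0, n]` into `[0, 2n]`. Applying an endomorphism `f` to `X + [0, n] = [0, 2n]`
and taking maxima gives `mx (f X) = mx (f {0, 1}) * mx X`. If `f` is surjective, some `V` has
`f V = {0, 1}`, so `mx (f {0, 1}) * mx V = 1`, forcing `mx (f {0, 1}) = 1` and hence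
`f {0, 1} = {0, 1}`. Conversely, if `f` fixes `{0, 1}` it preserves `mx`, so an injective `f`
permutes each of the finite level sets `{X | mx X = n}` and is therefore surjective.
-/

open Function

namespace P0

theorem le_mx {X : P0} {x : ℕ} (hx : x ∈ X.1) : x ≤ mx X := X.1.le_max' x hx

theorem mx_mem (X : P0) : mx X ∈ X.1 := X.1.max'_mem _

def interval (n : ℕ) : P0 := ⟨Finset.range (n + 1), Finset.mem_range.2 n.succ_pos⟩

theorem interval_one : interval 1 = ⟨{0, 1}, Finset.mem_insert_self 0 {1}⟩ :=
  Subtype.ext (by decide)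

theorem interval_add_interval (m n : ℕ) : interval m + interval n = interval (m + n) := by
  refine Subtype.ext (Finset.ext fun x => ?_)
  change x ∈ Finset.range (m + 1) + Finset.range (n + 1) ↔ x ∈ Finset.range (m + n + 1)
  simp only [Finset.mem_add, Finset.mem_range]
  constructor
  · rintro ⟨a, ha, b, hb, rfl⟩
    omega
  · intro hx
    exact ⟨min x m, by omega, x - min x m, by omega, by omega⟩

theorem interval_eq_nsmul (n : ℕ) : interval n = n • interval 1 := by
  induction n with
  | zero => exact Subtype.ext (by decide)
  | succ n ih => rw [← interval_add_interval, ih, succ_nsmul]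

theorem mx_interval (n : ℕ) : mx (interval n) = n :=
  le_antisymm (Finset.max'_le _ _ _ fun _ ha => Nat.lt_succ_iff.1 (Finset.mem_range.1 ha))
    (Finset.le_max' _ _ (Finset.self_mem_range_succ n))

theorem mx_add (X Y : P0) : mx (X + Y) = mx X + mx Y := by
  apply le_antisymm
  · refine Finset.max'_le _ _ _ fun z hz => ?_
    obtain ⟨a, ha, b, hb, rfl⟩ := Finset.mem_add.1 hz
    exact add_le_add (le_mx ha) (le_mx hb)
  · exact le_mx (Finset.add_mem_add (mx_mem X) (mx_mem Y))

def mxHom : P0 →+ ℕ where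
  toFun := mx
  map_zero' := mx_interval 0
  map_add' := mx_add

theorem add_interval_mx (X : P0) : X + interval (mx X) = interval (2 * mx X) := by
  refine Subtype.ext (Finset.ext fun x => ?_)
  change x ∈ X.1 + Finset.range (mx X + 1) ↔ x ∈ Finset.range (2 * mx X + 1)
  simp only [Finset.mem_add, Finset.mem_range]
  constructor
  · rintro ⟨a, ha, b, hb, rfl⟩
    have := le_mx ha
    omega
  · intro hx
    by_cases h : x ≤ mx X
    · exact ⟨0, X.2, x, by omega, zero_add x⟩
    · exact ⟨mx X, mx_mem X, x - mx X, by omega, by omega⟩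

theorem eq_interval_one_of_mx_eq_one {X : P0} (h : mx X = 1) : X = interval 1 := by
  refine Subtype.ext (Finset.ext fun x => ⟨fun hx => ?_, fun hx => ?_⟩)
  · exact Finset.mem_range.2 (Nat.lt_succ_of_le (h ▸ le_mx hx))
  · rcases Nat.lt_succ_iff.1 (Finset.mem_range.1 hx) |>.lt_or_eq with hx | rfl
    · exact Nat.lt_one_iff.1 hx ▸ X.2
    · exact h ▸ mx_mem X

theorem finite_setOf_mx_eq (n : ℕ) : {X : P0 | mx X = n}.Finite := by
  refine ((Finset.range (n + 1)).powerset.finite_toSet.preimage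
    Subtype.val_injective.injOn).subset ?_
  rintro X rfl
  refine Set.mem_preimage.2 (Finset.mem_coe.2 (Finset.mem_powerset.2 fun x hx => ?_))
  exact Finset.mem_range.2 (Nat.lt_succ_of_le (le_mx hx))

theorem mx_map_interval (f : P0 →+ P0) (n : ℕ) :
    mx (f (interval n)) = n * mx (f (interval 1)) := by
  rw [interval_eq_nsmul, map_nsmul]
  exact map_nsmul mxHom n _

theorem mx_map (f : P0 →+ P0) (X : P0) : mx (f X) = mx (f (interval 1)) * mx X := by
  have h := congrArg (fun Y => mx (f Y)) (add_interval_mx X)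
  rw [map_add, mx_add, mx_map_interval f (mx X), mx_map_interval f (2 * mx X)] at h
  linarith

theorem map_interval_one_of_surjective {f : P0 →+ P0} (hf : Surjective f) :
    f (interval 1) = interval 1 := by
  obtain ⟨V, hV⟩ := hf (interval 1)
  have h : mx (f (interval 1)) * mx V = 1 := by rw [← mx_map, hV, mx_interval]
  exact eq_interval_one_of_mx_eq_one (Nat.eq_one_of_mul_eq_one_right h)

theorem surjective_of_injective_of_map_interval_one {f : P0 →+ P0} (hf : Injective f)
    (h1 : f (interval 1) = interval 1) : Surjective f := by
  intro Y
  have hmaps : Set.MapsTo f {X | mx X = mx Y} {X | mx X = mx Y} := fun X hX => by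
    change mx (f X) = mx Y
    rwa [mx_map, h1, mx_interval, one_mul]
  obtain ⟨X, -, hX⟩ := (((finite_setOf_mx_eq _).injOn_iff_bijOn_of_mapsTo hmaps).1
    hf.injOn).surjOn (rfl : mx Y = mx Y)
  exact ⟨X, hX⟩

end P0

/-- an endomorphism of P_fin0(ℕ) is an automorphism iff it is
injective and sends `{0,1}` to `{0,1}`. -/
theorem stmt9 (f : P0 →+ P0) :
    Function.Bijective f ↔
      (Function.Injective f ∧
        f ⟨({0, 1} : Finset ℕ), by simp [mem_P0]⟩ = ⟨({0, 1} : Finset ℕ), by simp [mem_P0]⟩) := by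
  rw [← P0.interval_one]
  exact ⟨fun hf => ⟨hf.1, P0.map_interval_one_of_surjective hf.2⟩,
    fun ⟨hf, h1⟩ => ⟨hf, P0.surjective_of_injective_of_map_interval_one hf h1⟩⟩
end

section
/- A monoid endomorphism f of P_fin0(ℕ) is an automorphism if and only if it is surjective. -/
open Pointwise

lemma mem_mx (X : P0) : mx X ∈ X.1 := Finset.max'_mem _ _

lemma le_mx (X : P0) {a : ℕ} (h : a ∈ X.1) : a ≤ mx X := Finset.le_max' _ _ h

lemma mx_add (X Y : P0) : mx (X + Y) = mx X + mx Y := by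
  apply le_antisymm
  · apply Finset.max'_le
    intro y hy
    have : y ∈ X.1 + Y.1 := hy
    rw [Finset.mem_add] at this
    obtain ⟨a, ha, b, hb, rfl⟩ := this
    exact Nat.add_le_add (le_mx X ha) (le_mx Y hb)
  · apply Finset.le_max'
    show mx X + mx Y ∈ X.1 + Y.1
    exact Finset.add_mem_add (mem_mx X) (mem_mx Y)

def Iv (n : ℕ) : P0 := ⟨Finset.range (n+1), Finset.mem_range.mpr n.succ_pos⟩

lemma mx_Iv (n : ℕ) : mx (Iv n) = n := by
  apply le_antisymm
  · apply Finset.max'_le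
    intro y hy
    have : y ∈ Finset.range (n+1) := hy
    simp only [Finset.mem_range] at this
    omega
  · apply Finset.le_max'
    simp [Iv]

lemma Iv_add_Iv (a b : ℕ) : Iv a + Iv b = Iv (a + b) := by
  apply Subtype.ext
  show Finset.range (a+1) + Finset.range (b+1) = Finset.range (a+b+1)
  ext k
  simp only [Finset.mem_add, Finset.mem_range, Nat.lt_succ_iff]
  constructor
  · rintro ⟨i, hi, j, hj, rfl⟩; omega
  · intro hk
    exact ⟨min k a, by omega, k - min k a, by omega, by omega⟩

lemma add_Iv (X : P0) : X + Iv (mx X) = Iv (2 * mx X) := by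
  apply Subtype.ext
  show X.1 + Finset.range (mx X + 1) = Finset.range (2 * mx X + 1)
  ext k
  simp only [Finset.mem_add, Finset.mem_range, Nat.lt_succ_iff]
  constructor
  · rintro ⟨i, hi, j, hj, rfl⟩
    have := le_mx X hi
    omega
  · intro hk
    by_cases h : k ≤ mx X
    · exact ⟨0, X.2, k, h, by omega⟩
    · exact ⟨mx X, mem_mx X, k - mx X, by omega, by omega⟩

lemma mx_f_Iv (f : P0 →+ P0) (n : ℕ) : mx (f (Iv n)) = n * mx (f (Iv 1)) := by
  induction n with
  | zero =>
    have : Iv 0 = 0 := by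
      apply Subtype.ext
      show Finset.range 1 = {0}
      rfl
    rw [this, map_zero]
    have h0 : mx (0 : P0) ≤ 0 := by
      apply Finset.max'_le
      intro y hy
      have : y ∈ (0 : Finset ℕ) := hy
      simpa [Finset.mem_zero] using this
    omega
  | succ n ih =>
    have : Iv (n+1) = Iv n + Iv 1 := (Iv_add_Iv n 1).symm
    rw [this, map_add, mx_add, ih]
    ring

lemma mx_f (f : P0 →+ P0) (X : P0) : mx (f X) = mx X * mx (f (Iv 1)) := by
  have h1 : mx (f X) + mx (f (Iv (mx X))) = mx (f (Iv (2 * mx X))) := by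
    rw [← mx_add, ← map_add, add_Iv]
  rw [mx_f_Iv f (mx X), mx_f_Iv f (2 * mx X), two_mul, add_mul] at h1
  omega

/-- an endomorphism of P_fin0(ℕ) is an automorphism iff it is
surjective. -/
theorem stmt10 (f : P0 →+ P0) :
    Function.Bijective f ↔ Function.Surjective f := by
  constructor
  · exact fun h => h.2
  · intro hs
    refine ⟨?_, hs⟩
    -- the constant is 1
    obtain ⟨W, hW⟩ := hs (Iv 1)
    have hb : mx (f (Iv 1)) = 1 := by
      have := mx_f f W
      rw [hW, mx_Iv] at this
      exact (Nat.eq_one_of_mul_eq_one_left this.symm)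
    have hmx : ∀ X, mx (f X) = mx X := by
      intro X; rw [mx_f, hb, mul_one]
    intro X Y hXY
    set n := max (mx X) (mx Y) with hn
    set s : Set P0 := {Z | mx Z ≤ n} with hs'
    have hfin : s.Finite := by
      have : s ⊆ Subtype.val ⁻¹' ↑((Finset.range (n+1)).powerset) := by
        intro Z hZ
        simp only [Set.mem_preimage, Finset.coe_powerset, Set.mem_setOf_eq,
          Finset.mem_coe, Finset.mem_powerset]
        intro a ha
        have := le_mx Z ha
        have hZn : mx Z ≤ n := hZ
        simp only [Finset.mem_coe, Finset.mem_range]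
        omega
      exact Set.Finite.subset (Set.Finite.preimage Subtype.val_injective.injOn
        (Finset.finite_toSet _)) this
    have hmaps : Set.MapsTo f s s := by
      intro Z hZ
      show mx (f Z) ≤ n
      rw [hmx]; exact hZ
    have hsurj : Set.SurjOn f s s := by
      intro Z hZ
      obtain ⟨W, rfl⟩ := hs Z
      refine ⟨W, ?_, rfl⟩
      show mx W ≤ n
      have := hmx W
      have hZn : mx (f W) ≤ n := hZ
      omega
    have hbij := (Set.Finite.surjOn_iff_bijOn_of_mapsTo hfin hmaps).mp hsurj
    exact hbij.injOn (show mx X ≤ n from le_max_left _ _)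
      (show mx Y ≤ n from le_max_right _ _) hXY
end
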